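/- Under the following setup, the set A produced by the PTAS selection rule satisfies w(A)·(1 − 1/(m−2) − 2/(m−1)) ≤ w(OPT). Setup: m > 2 is an integer, k a positive multiple of m, and P a finite set of points in ℝ² with pairwise distinct x-coordinates and pairwise distinct y-coordinates; ξ₀ < … < ξ_m and η₀ < … < η_m are reals defining vertical strips X_i = {p : ξ_i ≤ p_x < ξ_{i+1}}, horizontal strips Y_j = {p : η_j ≤ p_y < η_{j+1}}, and cells C_{ij} = X_i ∩ Y_j; OPT ⊆ P with |OPT| = k minimizes w over all k-element subsets of P, OPT ⊆ ∪_{i,j} C_{ij}, and |OPT ∩ X_i| = |OPT ∩ Y_j| = k/m for all i, j; k_{ij} = |OPT ∩ C_{ij}|, ∇_{ij} = ((2i+1−m)k/m, (2j+1−m)k/m); for each i,j, A_{ij} ⊆ P ∩ C_{ij} with |A_{ij}| = k_{ij} minimizes Σ_{p∈A_{ij}} ⟨p, ∇_{ij}⟩ over all k_{ij}-element subsets of P ∩ C_{ij}; and A = ∪_{i,j} A_{ij}. -/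

import Mathlib

open Finset
open scoped Classical

noncomputable def dist1 (p q : Fin 2 → ℝ) : ℝ := ∑ i, |p i - q i|

/-- The sum of L1 distances over all unordered pairs of distinct points of `S`. -/
noncomputable def w (S : Finset (Fin 2 → ℝ)) : ℝ := (∑ p ∈ S, ∑ q ∈ S, dist1 p q) / 2

/-!
Split `2 w` into its `x`- and `y`-parts `spread (· 0)` and `spread (· 1)`. If a set is cut into
`m` strips of `N` points each, ordered along a coordinate `f`, then pairs in different strips
contribute exactly the linear moment `2 ∑ᵢ N (2i + 1 - m) ∑_{p ∈ Sᵢ} f p`, and by the triangle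
inequality the pairs inside the strips contribute at most `2/m` of the total. So the moments,
which add up to the cost `∑ ⟨p, ∇ᵢⱼ⟩` that `A` minimises cell by cell, bound `w A` up to the
factor `1 - 2/(m-1)` and are themselves bounded by `w OPT` for `OPT`, whose cells have the same
sizes as those of `A`.
-/

theorem sum_range_sum_range_eq_diag_add_lt {β : Type*} [AddCommMonoid β] (F : ℕ → ℕ → β)
    (M : ℕ) :
    ∑ i ∈ range M, ∑ j ∈ range M, F i j
      = ∑ i ∈ range M, F i i + ∑ j ∈ range M, ∑ i ∈ range j, (F i j + F j i) := by
  induction M with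
  | zero => simp
  | succ M ih =>
    simp only [sum_range_succ, sum_add_distrib] at ih ⊢
    rw [ih]
    abel

theorem sum_range_sum_range_sub {R : Type*} [CommRing R] (T : ℕ → R) (M : ℕ) :
    ∑ j ∈ range M, ∑ i ∈ range j, (T j - T i) = ∑ i ∈ range M, (2 * (i : R) + 1 - M) * T i := by
  induction M with
  | zero => simp
  | succ M ih =>
    have hshift : ∀ i : ℕ, (2 * (i : R) + 1 - (M + 1 : ℕ)) * T i = (2 * i + 1 - M) * T i - T i :=
      fun i => by push_cast; ring
    rw [sum_range_succ, ih, sum_range_succ, sum_sub_distrib, sum_const, card_range, nsmul_eq_mul,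
      sum_congr rfl fun i _ => hshift i, sum_sub_distrib, hshift]
    ring

theorem biUnion_biUnion_comm {ι κ α : Type*} [DecidableEq α] (s : Finset ι) (t : Finset κ)
    (B : ι → κ → Finset α) :
    (t.biUnion fun j => s.biUnion fun i => B i j)
      = s.biUnion fun i => t.biUnion fun j => B i j := by
  ext p
  simp only [mem_biUnion]
  exact ⟨fun ⟨j, hj, i, hi, hp⟩ => ⟨i, hi, j, hj, hp⟩, fun ⟨i, hi, j, hj, hp⟩ => ⟨j, hj, i, hi, hp⟩⟩

section Strips

variable {β : Type*} [LinearOrder β]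

theorem exists_mem_strip (g : ℕ → β) {x : β} (h0 : g 0 ≤ x) :
    ∀ {M : ℕ}, x < g M → ∃ i < M, g i ≤ x ∧ x < g (i + 1)
  | 0, hM => absurd h0 (not_le.mpr hM)
  | M + 1, hM => by
    by_cases hx : x < g M
    · obtain ⟨i, hi, h⟩ := exists_mem_strip g h0 hx
      exact ⟨i, by omega, h⟩
    · exact ⟨M, M.lt_add_one, not_lt.mp hx, hM⟩

theorem lt_of_mem_strip_of_mem_strip {g : ℕ → β} {M : ℕ} (hg : MonotoneOn g (Set.Iic M))
    {i j : ℕ} (hij : i < j) (hj : j < M) {x y : β} (hx : x < g (i + 1)) (hy : g j ≤ y) : x < y :=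
  hx.trans_le ((hg (Set.mem_Iic.2 (by omega)) (Set.mem_Iic.2 (by omega)) hij).trans hy)

end Strips

noncomputable def spread {α : Type*} (f : α → ℝ) (s : Finset α) : ℝ :=
  ∑ p ∈ s, ∑ q ∈ s, |f p - f q|

/-- The linear part of `spread` on `M` strips of `N` points each: strip `i` lies above `i` strips
and below `M - 1 - i`, whence the weight `2 i + 1 - M`. -/
noncomputable def stripMoment {α : Type*} (M N : ℕ) (f : α → ℝ) (S : ℕ → Finset α) : ℝ :=
  ∑ i ∈ range M, ∑ p ∈ S i, (N : ℝ) * (2 * i + 1 - M) * f p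

section Spread

variable {α : Type*} (f : α → ℝ)

theorem spread_nonneg (s : Finset α) : 0 ≤ spread f s :=
  sum_nonneg fun _ _ => sum_nonneg fun _ _ => abs_nonneg _

theorem sum_sum_abs_sub_of_le {s t : Finset α} (h : ∀ p ∈ s, ∀ q ∈ t, f p ≤ f q) :
    ∑ p ∈ s, ∑ q ∈ t, |f p - f q| = #s * ∑ q ∈ t, f q - #t * ∑ p ∈ s, f p := by
  have hrow : ∀ p ∈ s, ∑ q ∈ t, |f p - f q| = ∑ q ∈ t, f q - #t * f p := fun p hp => by
    rw [← nsmul_eq_mul, ← sum_const, ← sum_sub_distrib]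
    exact sum_congr rfl fun q hq => by rw [abs_sub_comm, abs_of_nonneg (sub_nonneg.2 (h p hp q hq))]
  rw [sum_congr rfl hrow, sum_sub_distrib, sum_const, nsmul_eq_mul, ← mul_sum]

theorem card_mul_spread_le (s t : Finset α) :
    #t * spread f s ≤ 2 * #s * ∑ p ∈ s, ∑ r ∈ t, |f p - f r| := by
  have htri : ∀ p q, #t * |f p - f q| ≤ ∑ r ∈ t, (|f p - f r| + |f q - f r|) := fun p q => by
    rw [← nsmul_eq_mul, ← sum_const]
    exact sum_le_sum fun r _ => (abs_sub_le _ (f r) _).trans_eq (by rw [abs_sub_comm (f r)])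
  calc #t * spread f s = ∑ p ∈ s, ∑ q ∈ s, #t * |f p - f q| := by simp only [spread, mul_sum]
    _ ≤ ∑ p ∈ s, ∑ q ∈ s, ∑ r ∈ t, (|f p - f r| + |f q - f r|) :=
      sum_le_sum fun p _ => sum_le_sum fun q _ => htri p q
    _ = 2 * #s * ∑ p ∈ s, ∑ r ∈ t, |f p - f r| := by
      simp only [sum_add_distrib, sum_const, nsmul_eq_mul, ← mul_sum]
      ring

end Spread

section StripFamily

variable {α : Type*} {f : α → ℝ} {g : ℕ → ℝ} {M N : ℕ} {S : ℕ → Finset α}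

theorem pairwiseDisjoint_of_mem_strip (hg : MonotoneOn g (Set.Iic M))
    (hS : ∀ i < M, ∀ p ∈ S i, g i ≤ f p ∧ f p < g (i + 1)) :
    (range M : Set ℕ).PairwiseDisjoint S := by
  intro i hi j hj hij
  simp only [coe_range, Set.mem_Iio] at hi hj
  refine disjoint_left.2 fun p hpi hpj => ?_
  rcases hij.lt_or_gt with h | h
  · exact (lt_of_mem_strip_of_mem_strip hg h hj (hS i hi p hpi).2 (hS j hj p hpj).1).false
  · exact (lt_of_mem_strip_of_mem_strip hg h hi (hS j hj p hpj).2 (hS i hi p hpi).1).false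

theorem spread_biUnion_eq [DecidableEq α] (hg : MonotoneOn g (Set.Iic M))
    (hS : ∀ i < M, ∀ p ∈ S i, g i ≤ f p ∧ f p < g (i + 1)) (hcard : ∀ i < M, #(S i) = N) :
    spread f ((range M).biUnion S) = ∑ i ∈ range M, spread f (S i) + 2 * stripMoment M N f S := by
  set D : ℕ → ℕ → ℝ := fun i j => ∑ p ∈ S i, ∑ q ∈ S j, |f p - f q|
  set T : ℕ → ℝ := fun i => ∑ p ∈ S i, f p
  have hcross : ∀ j < M, ∀ i < j, D i j + D j i = 2 * N * (T j - T i) := fun j hj i hij => by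
    have hDij : D i j = N * T j - N * T i := by
      simp only [D, T]
      rw [sum_sum_abs_sub_of_le f fun p hp q hq => (lt_of_mem_strip_of_mem_strip hg hij hj
        (hS i (hij.trans hj) p hp).2 (hS j hj q hq).1).le, hcard i (hij.trans hj), hcard j hj]
    have hDji : D j i = D i j := by
      simp only [D]
      rw [sum_comm]
      simp only [abs_sub_comm]
    rw [hDji, hDij]
    ring
  calc spread f ((range M).biUnion S) = ∑ i ∈ range M, ∑ j ∈ range M, D i j := by
        simp only [spread, sum_biUnion (pairwiseDisjoint_of_mem_strip hg hS), D]
        exact sum_congr rfl fun i _ => sum_comm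
    _ = ∑ i ∈ range M, D i i + ∑ j ∈ range M, ∑ i ∈ range j, (D i j + D j i) :=
        sum_range_sum_range_eq_diag_add_lt D M
    _ = ∑ i ∈ range M, spread f (S i) + 2 * N * ∑ j ∈ range M, ∑ i ∈ range j, (T j - T i) := by
        simp only [mul_sum]
        congr 1
        exact sum_congr rfl fun j hj => sum_congr rfl fun i hi =>
          hcross j (mem_range.1 hj) i (mem_range.1 hi)
    _ = ∑ i ∈ range M, spread f (S i) + 2 * stripMoment M N f S := by
        simp only [sum_range_sum_range_sub, stripMoment, T, mul_sum, mul_assoc]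

theorem mul_sum_spread_le [DecidableEq α] (hdisj : (range M : Set ℕ).PairwiseDisjoint S)
    (hcard : ∀ i < M, #(S i) = N) :
    M * ∑ i ∈ range M, spread f (S i) ≤ 2 * spread f ((range M).biUnion S) := by
  set U := (range M).biUnion S
  rcases N.eq_zero_or_pos with rfl | hN
  · have hempty : ∀ i ∈ range M, spread f (S i) = 0 := fun i hi => by
      simp [spread, card_eq_zero.1 (hcard i (mem_range.1 hi))]
    rw [sum_eq_zero hempty, mul_zero]
    exact mul_nonneg zero_le_two (spread_nonneg f U)
  have hU : (#U : ℝ) = M * N := by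
    rw [card_biUnion hdisj, sum_congr rfl fun i hi => hcard i (mem_range.1 hi)]
    simp
  have hstrip : ∀ i ∈ range M, M * spread f (S i) ≤ 2 * ∑ p ∈ S i, ∑ r ∈ U, |f p - f r| :=
    fun i hi => by
      have h := card_mul_spread_le f (S i) U
      rw [hU, hcard i (mem_range.1 hi)] at h
      exact le_of_mul_le_mul_left (by linarith) (Nat.cast_pos.2 hN : (0 : ℝ) < N)
  calc M * ∑ i ∈ range M, spread f (S i)
      ≤ ∑ i ∈ range M, 2 * ∑ p ∈ S i, ∑ r ∈ U, |f p - f r| := by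
        rw [mul_sum]; exact sum_le_sum hstrip
    _ = 2 * spread f U := by rw [← mul_sum, spread, sum_biUnion hdisj]

theorem two_mul_stripMoment_le_spread [DecidableEq α] (hg : MonotoneOn g (Set.Iic M))
    (hS : ∀ i < M, ∀ p ∈ S i, g i ≤ f p ∧ f p < g (i + 1)) (hcard : ∀ i < M, #(S i) = N) :
    2 * stripMoment M N f S ≤ spread f ((range M).biUnion S) := by
  rw [spread_biUnion_eq hg hS hcard]
  linarith [sum_nonneg fun i (_ : i ∈ range M) => spread_nonneg f (S i)]

theorem spread_mul_le_two_mul_stripMoment [DecidableEq α] (hM : 1 < M)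
    (hg : MonotoneOn g (Set.Iic M))
    (hS : ∀ i < M, ∀ p ∈ S i, g i ≤ f p ∧ f p < g (i + 1)) (hcard : ∀ i < M, #(S i) = N) :
    (1 - 2 / ((M : ℝ) - 1)) * spread f ((range M).biUnion S) ≤ 2 * stripMoment M N f S := by
  set t := spread f ((range M).biUnion S)
  set intra := ∑ i ∈ range M, spread f (S i)
  have ht : t = intra + 2 * stripMoment M N f S := spread_biUnion_eq hg hS hcard
  have hintra : M * intra ≤ 2 * t := mul_sum_spread_le (pairwiseDisjoint_of_mem_strip hg hS) hcard
  have hM' : (0 : ℝ) < M - 1 := by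
    have : (1 : ℝ) < M := by exact_mod_cast hM
    linarith
  have hle : intra ≤ 2 / ((M : ℝ) - 1) * t := by
    rw [div_mul_eq_mul_div, le_div_iff₀ hM']
    nlinarith [sum_nonneg fun i (_ : i ∈ range M) => spread_nonneg f (S i)]
  linarith

end StripFamily

theorem biUnion_filter_strip_eq {α : Type*} [DecidableEq α] (s : Finset α) (f : α → ℝ)
    (g : ℕ → ℝ) {M : ℕ} (hs : ∀ p ∈ s, g 0 ≤ f p ∧ f p < g M) :
    (range M).biUnion (fun i => s.filter fun p => g i ≤ f p ∧ f p < g (i + 1)) = s := by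
  ext p
  simp only [mem_biUnion, mem_filter, mem_range]
  constructor
  · rintro ⟨_, _, hp, _⟩
    exact hp
  · intro hp
    obtain ⟨i, hi, hpi⟩ := exists_mem_strip g (hs p hp).1 (hs p hp).2
    exact ⟨i, hi, hp, hpi⟩

theorem w_eq_spread (S : Finset (Fin 2 → ℝ)) : w S = (spread (· 0) S + spread (· 1) S) / 2 := by
  simp only [w, spread, dist1, Fin.sum_univ_two, sum_add_distrib]

theorem w_nonneg (S : Finset (Fin 2 → ℝ)) : 0 ≤ w S := by
  rw [w_eq_spread]
  linarith [spread_nonneg (· 0) S, spread_nonneg (· 1) S]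

/-- The cost `∑ p, ⟨p, ∇_{ij}⟩` of a family of cells, with `N = k / m` points per strip. -/
noncomputable def gridCost (m N : ℕ) (B : ℕ → ℕ → Finset (Fin 2 → ℝ)) : ℝ :=
  ∑ i ∈ range m, ∑ j ∈ range m, ∑ p ∈ B i j,
    ((N : ℝ) * (2 * i + 1 - m) * p 0 + (N : ℝ) * (2 * j + 1 - m) * p 1)

def InCells (m : ℕ) (ξ η : ℕ → ℝ) (B : ℕ → ℕ → Finset (Fin 2 → ℝ)) : Prop :=
  ∀ i < m, ∀ j < m, ∀ p ∈ B i j, (ξ i ≤ p 0 ∧ p 0 < ξ (i + 1)) ∧ (η j ≤ p 1 ∧ p 1 < η (j + 1))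

section Grid

variable {m N : ℕ} {ξ η : ℕ → ℝ} {B : ℕ → ℕ → Finset (Fin 2 → ℝ)}

theorem row_mem_strip (hB : InCells m ξ η B) :
    ∀ i < m, ∀ p ∈ (range m).biUnion fun j => B i j, ξ i ≤ p 0 ∧ p 0 < ξ (i + 1) := by
  intro i hi p hp
  obtain ⟨j, hj, hpj⟩ := mem_biUnion.1 hp
  exact (hB i hi j (mem_range.1 hj) p hpj).1

theorem col_mem_strip (hB : InCells m ξ η B) :
    ∀ j < m, ∀ p ∈ (range m).biUnion fun i => B i j, η j ≤ p 1 ∧ p 1 < η (j + 1) := by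
  intro j hj p hp
  obtain ⟨i, hi, hpi⟩ := mem_biUnion.1 hp
  exact (hB i (mem_range.1 hi) j hj p hpi).2

theorem pairwiseDisjoint_row (hη : MonotoneOn η (Set.Iic m))
    (hB : InCells m ξ η B) {i : ℕ} (hi : i < m) :
    (range m : Set ℕ).PairwiseDisjoint fun j => B i j :=
  pairwiseDisjoint_of_mem_strip hη fun j hj p hp => (hB i hi j hj p hp).2

theorem pairwiseDisjoint_col (hξ : MonotoneOn ξ (Set.Iic m))
    (hB : InCells m ξ η B) {j : ℕ} (hj : j < m) :
    (range m : Set ℕ).PairwiseDisjoint fun i => B i j :=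
  pairwiseDisjoint_of_mem_strip hξ fun i hi p hp => (hB i hi j hj p hp).1

theorem card_row_eq (hη : MonotoneOn η (Set.Iic m)) {C : ℕ → ℕ → Finset (Fin 2 → ℝ)}
    (hB : InCells m ξ η B) (hC : InCells m ξ η C) (hBC : ∀ i < m, ∀ j < m, #(B i j) = #(C i j))
    {i : ℕ} (hi : i < m) :
    #((range m).biUnion fun j => B i j) = #((range m).biUnion fun j => C i j) := by
  rw [card_biUnion (pairwiseDisjoint_row hη hB hi), card_biUnion (pairwiseDisjoint_row hη hC hi)]
  exact sum_congr rfl fun j hj => hBC i hi j (mem_range.1 hj)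

theorem card_col_eq (hξ : MonotoneOn ξ (Set.Iic m)) {C : ℕ → ℕ → Finset (Fin 2 → ℝ)}
    (hB : InCells m ξ η B) (hC : InCells m ξ η C) (hBC : ∀ i < m, ∀ j < m, #(B i j) = #(C i j))
    {j : ℕ} (hj : j < m) :
    #((range m).biUnion fun i => B i j) = #((range m).biUnion fun i => C i j) := by
  rw [card_biUnion (pairwiseDisjoint_col hξ hB hj), card_biUnion (pairwiseDisjoint_col hξ hC hj)]
  exact sum_congr rfl fun i hi => hBC i (mem_range.1 hi) j hj

theorem stripMoment_rows_add_cols (hξ : MonotoneOn ξ (Set.Iic m)) (hη : MonotoneOn η (Set.Iic m))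
    (hB : InCells m ξ η B) :
    stripMoment m N (· 0) (fun i => (range m).biUnion fun j => B i j)
      + stripMoment m N (· 1) (fun j => (range m).biUnion fun i => B i j) = gridCost m N B := by
  have hrows : stripMoment m N (· 0) (fun i => (range m).biUnion fun j => B i j)
      = ∑ i ∈ range m, ∑ j ∈ range m, ∑ p ∈ B i j, (N : ℝ) * (2 * i + 1 - m) * p 0 :=
    sum_congr rfl fun i hi => sum_biUnion (pairwiseDisjoint_row hη hB (mem_range.1 hi))
  have hcols : stripMoment m N (· 1) (fun j => (range m).biUnion fun i => B i j)
      = ∑ i ∈ range m, ∑ j ∈ range m, ∑ p ∈ B i j, (N : ℝ) * (2 * j + 1 - m) * p 1 := by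
    rw [sum_comm]
    exact sum_congr rfl fun j hj => sum_biUnion (pairwiseDisjoint_col hξ hB (mem_range.1 hj))
  rw [hrows, hcols, gridCost]
  simp only [← sum_add_distrib]

theorem gridCost_le_w (hξ : MonotoneOn ξ (Set.Iic m)) (hη : MonotoneOn η (Set.Iic m))
    (hB : InCells m ξ η B)
    (hrow : ∀ i < m, #((range m).biUnion fun j => B i j) = N)
    (hcol : ∀ j < m, #((range m).biUnion fun i => B i j) = N) :
    gridCost m N B ≤ w ((range m).biUnion fun i => (range m).biUnion fun j => B i j) := by
  have hx := two_mul_stripMoment_le_spread hξ (row_mem_strip hB) hrow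
  have hy := two_mul_stripMoment_le_spread hη (col_mem_strip hB) hcol
  rw [biUnion_biUnion_comm (range m) (range m) B] at hy
  rw [← stripMoment_rows_add_cols hξ hη hB, w_eq_spread]
  linarith

theorem w_mul_le_gridCost (hm : 1 < m) (hξ : MonotoneOn ξ (Set.Iic m))
    (hη : MonotoneOn η (Set.Iic m))
    (hB : InCells m ξ η B)
    (hrow : ∀ i < m, #((range m).biUnion fun j => B i j) = N)
    (hcol : ∀ j < m, #((range m).biUnion fun i => B i j) = N) :
    w ((range m).biUnion fun i => (range m).biUnion fun j => B i j) * (1 - 2 / ((m : ℝ) - 1))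
      ≤ gridCost m N B := by
  have hx := spread_mul_le_two_mul_stripMoment hm hξ (row_mem_strip hB) hrow
  have hy := spread_mul_le_two_mul_stripMoment hm hη (col_mem_strip hB) hcol
  rw [biUnion_biUnion_comm (range m) (range m) B] at hy
  rw [← stripMoment_rows_add_cols hξ hη hB, w_eq_spread]
  linarith

end Grid

section Cells

variable {ξ η : ℕ → ℝ} {m : ℕ} {s : Finset (Fin 2 → ℝ)}

theorem biUnion_cells_row (hs : ∀ p ∈ s, ξ 0 ≤ p 0 ∧ p 0 < ξ m ∧ η 0 ≤ p 1 ∧ p 1 < η m)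
    (i : ℕ) :
    ((range m).biUnion fun j => s.filter fun p =>
        (ξ i ≤ p 0 ∧ p 0 < ξ (i + 1)) ∧ (η j ≤ p 1 ∧ p 1 < η (j + 1)))
      = s.filter fun p => ξ i ≤ p 0 ∧ p 0 < ξ (i + 1) := by
  conv_rhs => rw [← biUnion_filter_strip_eq (s.filter _) (· 1) η
    fun p hp => ⟨(hs p (mem_filter.1 hp).1).2.2.1, (hs p (mem_filter.1 hp).1).2.2.2⟩]
  simp only [filter_filter]

theorem biUnion_cells_col (hs : ∀ p ∈ s, ξ 0 ≤ p 0 ∧ p 0 < ξ m ∧ η 0 ≤ p 1 ∧ p 1 < η m)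
    (j : ℕ) :
    ((range m).biUnion fun i => s.filter fun p =>
        (ξ i ≤ p 0 ∧ p 0 < ξ (i + 1)) ∧ (η j ≤ p 1 ∧ p 1 < η (j + 1)))
      = s.filter fun p => η j ≤ p 1 ∧ p 1 < η (j + 1) := by
  conv_rhs => rw [← biUnion_filter_strip_eq (s.filter _) (· 0) ξ
    fun p hp => ⟨(hs p (mem_filter.1 hp).1).1, (hs p (mem_filter.1 hp).1).2.1⟩]
  simp only [filter_filter, and_comm]

theorem biUnion_cells (hs : ∀ p ∈ s, ξ 0 ≤ p 0 ∧ p 0 < ξ m ∧ η 0 ≤ p 1 ∧ p 1 < η m) :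
    ((range m).biUnion fun i => (range m).biUnion fun j => s.filter fun p =>
        (ξ i ≤ p 0 ∧ p 0 < ξ (i + 1)) ∧ (η j ≤ p 1 ∧ p 1 < η (j + 1))) = s := by
  simp only [biUnion_cells_row hs]
  exact biUnion_filter_strip_eq s (· 0) ξ fun p hp => ⟨(hs p hp).1, (hs p hp).2.1⟩

theorem inCells_filter : InCells m ξ η fun i j => s.filter fun p =>
    (ξ i ≤ p 0 ∧ p 0 < ξ (i + 1)) ∧ (η j ≤ p 1 ∧ p 1 < η (j + 1)) :=
  fun _ _ _ _ _ hp => (mem_filter.1 hp).2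

end Cells

theorem gridCost_le_gridCost {m k : ℕ} (hmk : m ∣ k) {B C : ℕ → ℕ → Finset (Fin 2 → ℝ)}
    (h : ∀ i < m, ∀ j < m,
      ∑ p ∈ B i j, (((2 * (i : ℝ) + 1 - m) * k / m) * p 0 + ((2 * (j : ℝ) + 1 - m) * k / m) * p 1)
        ≤ ∑ p ∈ C i j,
          (((2 * (i : ℝ) + 1 - m) * k / m) * p 0 + ((2 * (j : ℝ) + 1 - m) * k / m) * p 1)) :
    gridCost m (k / m) B ≤ gridCost m (k / m) C := by
  have hcoef : ∀ a : ℕ, (2 * (a : ℝ) + 1 - m) * k / m = ((k / m : ℕ) : ℝ) * (2 * a + 1 - m) :=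
    fun a => by
      obtain rfl | hm := eq_or_ne m 0
      · simp
      rw [Nat.cast_div hmk (Nat.cast_ne_zero.2 hm)]
      ring
  exact sum_le_sum fun i hi => sum_le_sum fun j hj => by
    simpa only [hcoef] using h i (mem_range.1 hi) j (mem_range.1 hj)

theorem ptas_guarantee
    (m k : ℕ) (hm : 2 < m) (hmk : m ∣ k)
    (P : Finset (Fin 2 → ℝ))
    (ξ η : ℕ → ℝ)
    (hξ : ∀ i < m, ξ i < ξ (i + 1))
    (hη : ∀ j < m, η j < η (j + 1))
    (OPT : Finset (Fin 2 → ℝ)) (hOP : OPT ⊆ P)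
    -- OPT is covered by the cells `C_{ij} = X_i ∩ Y_j`
    (hOcover : ∀ p ∈ OPT, ξ 0 ≤ p 0 ∧ p 0 < ξ m ∧ η 0 ≤ p 1 ∧ p 1 < η m)
    -- each vertical strip `X_i` and each horizontal strip `Y_j` contains exactly
    -- `k/m` points of OPT
    (hOX : ∀ i < m,
      (OPT.filter fun p => ξ i ≤ p 0 ∧ p 0 < ξ (i + 1)).card = k / m)
    (hOY : ∀ j < m,
      (OPT.filter fun p => η j ≤ p 1 ∧ p 1 < η (j + 1)).card = k / m)
    (A : ℕ → ℕ → Finset (Fin 2 → ℝ))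
    -- `A_{ij} ⊆ P ∩ C_{ij}` with `|A_{ij}| = k_{ij} = |OPT ∩ C_{ij}|` minimizes
    -- `Σ_{p ∈ A_{ij}} ⟨p, ∇_{ij}⟩` where `∇_{ij} = ((2i+1−m)k/m, (2j+1−m)k/m)`
    (hAsub : ∀ i < m, ∀ j < m,
      A i j ⊆ P.filter fun p =>
        (ξ i ≤ p 0 ∧ p 0 < ξ (i + 1)) ∧ (η j ≤ p 1 ∧ p 1 < η (j + 1)))
    (hAcard : ∀ i < m, ∀ j < m,
      (A i j).card = (OPT.filter fun p =>
        (ξ i ≤ p 0 ∧ p 0 < ξ (i + 1)) ∧ (η j ≤ p 1 ∧ p 1 < η (j + 1))).card)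
    (hAmin : ∀ i < m, ∀ j < m,
      ∀ B ⊆ (P.filter fun p =>
        (ξ i ≤ p 0 ∧ p 0 < ξ (i + 1)) ∧ (η j ≤ p 1 ∧ p 1 < η (j + 1))),
        B.card = (A i j).card →
        ∑ p ∈ A i j,
          (((2 * (i : ℝ) + 1 - m) * k / m) * p 0 +
           ((2 * (j : ℝ) + 1 - m) * k / m) * p 1) ≤
        ∑ p ∈ B,
          (((2 * (i : ℝ) + 1 - m) * k / m) * p 0 +
           ((2 * (j : ℝ) + 1 - m) * k / m) * p 1)) :
    w ((Finset.range m).biUnion fun i => (Finset.range m).biUnion fun j => A i j) *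
      (1 - 1 / ((m : ℝ) - 2) - 2 / ((m : ℝ) - 1)) ≤ w OPT := by
  have hξ' : MonotoneOn ξ (Set.Iic m) := (strictMonoOn_Iic_of_lt_succ hξ).monotoneOn
  have hη' : MonotoneOn η (Set.Iic m) := (strictMonoOn_Iic_of_lt_succ hη).monotoneOn
  set O : ℕ → ℕ → Finset (Fin 2 → ℝ) := fun i j => OPT.filter fun p =>
    (ξ i ≤ p 0 ∧ p 0 < ξ (i + 1)) ∧ (η j ≤ p 1 ∧ p 1 < η (j + 1))
  have hA : InCells m ξ η A := fun i hi j hj _ hp => (mem_filter.1 (hAsub i hi j hj hp)).2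
  have hOrow : ∀ i < m, #((range m).biUnion fun j => O i j) = k / m := fun i hi => by
    rw [biUnion_cells_row hOcover, hOX i hi]
  have hOcol : ∀ j < m, #((range m).biUnion fun i => O i j) = k / m := fun j hj => by
    rw [biUnion_cells_col hOcover, hOY j hj]
  have hArow : ∀ i < m, #((range m).biUnion fun j => A i j) = k / m := fun i hi => by
    rw [card_row_eq hη' hA inCells_filter hAcard hi, hOrow i hi]
  have hAcol : ∀ j < m, #((range m).biUnion fun i => A i j) = k / m := fun j hj => by
    rw [card_col_eq hξ' hA inCells_filter hAcard hj, hOcol j hj]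
  have hslack : 1 - 1 / ((m : ℝ) - 2) - 2 / ((m : ℝ) - 1) ≤ 1 - 2 / ((m : ℝ) - 1) := by
    have : (2 : ℝ) < m := by exact_mod_cast hm
    linarith [one_div_pos.2 (sub_pos.2 this)]
  calc _ ≤ w ((range m).biUnion fun i => (range m).biUnion fun j => A i j)
          * (1 - 2 / ((m : ℝ) - 1)) := mul_le_mul_of_nonneg_left hslack (w_nonneg _)
    _ ≤ gridCost m (k / m) A := w_mul_le_gridCost (by omega) hξ' hη' hA hArow hAcol
    _ ≤ gridCost m (k / m) O := gridCost_le_gridCost hmk fun i hi j hj =>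
        hAmin i hi j hj (O i j) (filter_subset_filter _ hOP) (hAcard i hi j hj).symm
    _ ≤ w ((range m).biUnion fun i => (range m).biUnion fun j => O i j) :=
        gridCost_le_w hξ' hη' inCells_filter hOrow hOcol
    _ = w OPT := by rw [biUnion_cells hOcover]
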